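/- arXiv:1910.01893 — 6 statements merged into one kernel-verified Lean document; each statement's English description precedes it below -/
import Mathlib

section
/- For elements x, y of an integral domain R, the matrix with first row (x, y) and second row (0, 0) is a product of idempotent 2×2 matrices if and only if the matrix with first row (y, x) and second row (0, 0) is a product of idempotent 2×2 matrices. -/
/-!
Conjugating by the permutation matrix `P = !![0, 1; 1, 0]` preserves products of idempotents and
turns `!![x, y; 0, 0]` into `!![0, 0; y, x]`; left multiplication by the idempotent `!![1, 1; 0, 0]`
then adds the second row to the first, giving `!![y, x; 0, 0]`.
-/

def IsIdemProd {R : Type*} [CommRing R] (M : Matrix (Fin 2) (Fin 2) R) : Prop :=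
  ∃ l : List (Matrix (Fin 2) (Fin 2) R), (∀ T ∈ l, T * T = T) ∧ M = l.prod

open Matrix

theorem IsIdempotentElem.units_mul_mul_inv {M : Type*} [Monoid M] (u : Mˣ) {e : M}
    (he : IsIdempotentElem e) : IsIdempotentElem (↑u * e * ↑u⁻¹) := by
  rw [IsIdempotentElem]
  simp only [mul_assoc, Units.inv_mul_cancel_left, ← mul_assoc e, he.eq]

theorem Submonoid.units_mul_mul_inv_mem_closure_isIdempotentElem {M : Type*} [Monoid M] (u : Mˣ)
    {a : M} (ha : a ∈ closure {e : M | IsIdempotentElem e}) :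
    ↑u * a * ↑u⁻¹ ∈ closure {e : M | IsIdempotentElem e} := by
  induction ha using closure_induction with
  | mem e he => exact subset_closure (IsIdempotentElem.units_mul_mul_inv u he)
  | one => simp
  | mul a b _ _ iha ihb =>
    convert mul_mem iha ihb using 1
    simp only [mul_assoc, Units.inv_mul_cancel_left]

theorem isIdemProd_iff_mem_closure {R : Type*} [CommRing R] (M : Matrix (Fin 2) (Fin 2) R) :
    IsIdemProd M ↔ M ∈ Submonoid.closure {e | IsIdempotentElem e} := by
  constructor
  · rintro ⟨l, hl, rfl⟩
    exact Submonoid.list_prod_mem _ fun T hT => Submonoid.subset_closure (hl T hT)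
  · intro hM
    obtain ⟨l, hl, rfl⟩ := Submonoid.exists_list_of_mem_closure hM
    exact ⟨l, hl, rfl⟩

def swapUnit (R : Type*) [CommRing R] : (Matrix (Fin 2) (Fin 2) R)ˣ :=
  ⟨!![0, 1; 1, 0], !![0, 1; 1, 0], by simp [one_fin_two], by simp [one_fin_two]⟩

theorem IsIdemProd.swap_first_row {R : Type*} [CommRing R] {x y : R} (h : IsIdemProd !![x, y; 0, 0]) :
    IsIdemProd !![y, x; 0, 0] := by
  rw [isIdemProd_iff_mem_closure] at h ⊢
  have hE : IsIdempotentElem !![(1 : R), 1; 0, 0] := by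
    rw [IsIdempotentElem, mul_fin_two]
    simp
  have hconj := Submonoid.units_mul_mul_inv_mem_closure_isIdempotentElem (swapUnit R) h
  convert mul_mem (Submonoid.subset_closure (s := {e | IsIdempotentElem e}) hE) hconj using 1
  simp [swapUnit]

theorem stmt_3_general {R : Type*} [CommRing R] (x y : R) :
    IsIdemProd !![x, y; 0, 0] ↔ IsIdemProd !![y, x; 0, 0] :=
  ⟨IsIdemProd.swap_first_row, IsIdemProd.swap_first_row⟩

theorem stmt_3 {R : Type*} [CommRing R] [IsDomain R] (x y : R) :
    IsIdemProd !![x, y; 0, 0] ↔ IsIdemProd !![y, x; 0, 0] :=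
  stmt_3_general x y
end

section
/- If a 2×2 matrix with first row (x, y) and determinant 1 over an integral domain R can be written as a product of elementary matrices, then x and y admit a weak Euclidean algorithm in R. -/
/-- `x` and `y` admit a weak Euclidean algorithm in `R`. -/
def WeakEuclid {R : Type*} [CommRing R] (x y : R) : Prop :=
  ∃ (n : ℕ) (r q : ℕ → R), r 0 = x ∧ r 1 = y ∧
    (∀ i < n, r i = q i * r (i + 1) + r (i + 2)) ∧ r (n + 1) = 0

/-- `E` is an elementary 2×2 matrix. -/
def IsElementary {R : Type*} [CommRing R] (E : Matrix (Fin 2) (Fin 2) R) : Prop :=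
  ∃ q : R, E = !![1, q; 0, 1] ∨ E = !![1, 0; q, 1]

/-!
The pairs admitting a weak Euclidean algorithm contain `(1, 0)`, the first row of the identity,
and are stable under the column operations `(a, b) ↦ (a, b + c a)` and `(a, b) ↦ (a + c b, b)`,
which is what right multiplication by an elementary matrix does to a first row.
Both operations are obtained by prepending division steps (one of them with quotient `0`)
to an existing algorithm.
-/

namespace WeakEuclid

variable {R : Type*} [CommRing R]

theorem zero_right (a : R) : WeakEuclid a 0 :=
  ⟨0, fun | 0 => a | _ + 1 => 0, fun _ => 0, rfl, rfl, by simp, rfl⟩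

theorem cons {a b : R} (h : WeakEuclid a b) (q : R) : WeakEuclid (q * a + b) a := by
  obtain ⟨n, r, s, h0, h1, hstep, hend⟩ := h
  refine ⟨n + 1, fun | 0 => q * a + b | k + 1 => r k, fun | 0 => q | k + 1 => s k,
    rfl, h0, ?_, hend⟩
  rintro (_ | i) hi
  · simp [h0, h1]
  · exact hstep i (by omega)

theorem swap {a b : R} (h : WeakEuclid a b) : WeakEuclid b a := by
  simpa using h.cons 0

theorem mul_add_left {a b : R} (h : WeakEuclid a b) (c : R) : WeakEuclid (c * b + a) b :=
  h.swap.cons c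

theorem mul_add_right {a b : R} (h : WeakEuclid a b) (c : R) : WeakEuclid a (c * a + b) :=
  (h.cons c).swap

theorem mul_isElementary {M E : Matrix (Fin 2) (Fin 2) R} (h : WeakEuclid (M 0 0) (M 0 1))
    (hE : IsElementary E) : WeakEuclid ((M * E) 0 0) ((M * E) 0 1) := by
  obtain ⟨q, rfl | rfl⟩ := hE
  · simpa [Matrix.mul_apply, mul_comm] using h.mul_add_right q
  · simpa [Matrix.mul_apply, mul_comm, add_comm] using h.mul_add_left q

theorem of_list_prod {l : List (Matrix (Fin 2) (Fin 2) R)} (hl : ∀ E ∈ l, IsElementary E) :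
    WeakEuclid (l.prod 0 0) (l.prod 0 1) := by
  induction l using List.reverseRecOn with
  | nil => simpa using zero_right (1 : R)
  | append_singleton l E ih =>
    rw [List.prod_append, List.prod_singleton]
    exact (ih fun F hF => hl F (by simp [hF])).mul_isElementary (hl E (by simp))

end WeakEuclid

theorem stmt_4_general {R : Type*} [CommRing R] (x y z t : R)
    (M : Matrix (Fin 2) (Fin 2) R) (hM : M = !![x, y; z, t])
    (hGE : ∃ l : List (Matrix (Fin 2) (Fin 2) R), (∀ E ∈ l, IsElementary E) ∧ M = l.prod) :
    WeakEuclid x y := by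
  obtain ⟨l, hl, rfl⟩ := hGE
  simpa [hM] using WeakEuclid.of_list_prod hl

theorem stmt_4 {R : Type*} [CommRing R] [IsDomain R] (x y z t : R)
    (M : Matrix (Fin 2) (Fin 2) R) (hM : M = !![x, y; z, t]) (hdet : M.det = 1)
    (hGE : ∃ l : List (Matrix (Fin 2) (Fin 2) R), (∀ E ∈ l, IsElementary E) ∧ M = l.prod) :
    WeakEuclid x y :=
  stmt_4_general x y z t M hM hGE
end

section
/- If two elements x, y of an integral domain R admit a weak Euclidean algorithm, then the 2×2 matrix with first row (x, y) and second row (0, 0) is a product of idempotent matrices over R. -/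
open Matrix

section

variable {R : Type*} [CommRing R]

theorem Matrix.isIdempotentElem_vecMulVec {n : Type*} [Fintype n] {w t : n → R}
    (h : t ⬝ᵥ w = 1) : IsIdempotentElem (vecMulVec w t) := by
  rw [IsIdempotentElem, vecMulVec_mul_vecMulVec, h, one_smul]

theorem IsIdemProd.one : IsIdemProd (1 : Matrix (Fin 2) (Fin 2) R) :=
  ⟨[], by simp, rfl⟩

theorem IsIdemProd.mul_isIdempotentElem {A E : Matrix (Fin 2) (Fin 2) R} (hA : IsIdemProd A)
    (hE : IsIdempotentElem E) : IsIdemProd (A * E) := by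
  obtain ⟨l, hl, rfl⟩ := hA
  exact ⟨l ++ [E], by simpa [or_imp, forall_and] using ⟨hl, hE⟩, by simp⟩

theorem IsIdemProd.vecMulVec_smul {a s t w : Fin 2 → R} {c : R}
    (h : IsIdemProd (vecMulVec a (c • s))) (hs : s ⬝ᵥ w = 1) (ht : t ⬝ᵥ w = 1) :
    IsIdemProd (vecMulVec a (c • t)) := by
  have := h.mul_isIdempotentElem (isIdempotentElem_vecMulVec ht)
  rwa [vecMulVec_mul_vecMulVec, smul_dotProduct, hs, smul_eq_mul, mul_one] at this

theorem isIdemProd_single_zero_zero (d : R) : IsIdemProd (single 0 0 d) := by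
  have h : single 0 0 d = 1 * !![1, 0; 0, 0] * !![0, d; 0, 1] * !![(1 : R), 0; 1, 0] := by
    ext i j; fin_cases i <;> fin_cases j <;> simp
  rw [h]
  refine ((IsIdemProd.one.mul_isIdempotentElem ?_).mul_isIdempotentElem ?_).mul_isIdempotentElem
    ?_ <;> · rw [IsIdempotentElem, mul_fin_two]; simp

def euclidStep (q : R) : Matrix (Fin 2) (Fin 2) R := !![q, 1; 1, 0]

variable (R) in
abbrev euclidMonoid : Submonoid (Matrix (Fin 2) (Fin 2) R) :=
  Submonoid.closure (Set.range euclidStep)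

theorem isUnit_det_of_mem_euclidMonoid {X : Matrix (Fin 2) (Fin 2) R}
    (hX : X ∈ euclidMonoid R) : IsUnit X.det := by
  refine (Submonoid.closure_le (S := (IsUnit.submonoid R).comap (detMonoidHom (n := Fin 2)))).mpr
    ?_ hX
  rintro _ ⟨q, rfl⟩
  simp [IsUnit.mem_submonoid_iff, euclidStep]

theorem isIdemProd_vecMulVec_smul_row_zero (d : R) {X : Matrix (Fin 2) (Fin 2) R}
    (hX : X ∈ euclidMonoid R) : IsIdemProd (vecMulVec ![1, 0] (d • X 0)) := by
  induction hX using Submonoid.closure_induction_left with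
  | one =>
    convert isIdemProd_single_zero_zero d using 1
    ext i j; fin_cases i <;> fin_cases j <;> simp [vecMulVec_apply, one_apply]
  | mul_left _ hP X hX ih =>
    obtain ⟨q, rfl⟩ := hP
    have hXw : X *ᵥ (X⁻¹ *ᵥ ![1, 1 - q]) = ![1, 1 - q] := by
      rw [mulVec_mulVec, mul_nonsing_inv _ (isUnit_det_of_mem_euclidMonoid hX), one_mulVec]
    refine ih.vecMulVec_smul (congrFun hXw 0) ?_
    change ((euclidStep q * X) *ᵥ _) 0 = 1
    rw [← mulVec_mulVec, hXw]
    simp [euclidStep]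

theorem WeakEuclid.exists_eq_smul_row_zero {x y : R} (h : WeakEuclid x y) :
    ∃ d : R, ∃ X ∈ euclidMonoid R, ![x, y] = d • X 0 := by
  obtain ⟨n, r, q, rfl, rfl, hrec, hend⟩ := h
  suffices ∀ i ≤ n, ∃ X ∈ euclidMonoid R, ![r i, r (i + 1)] = r n • X 0 from
    ⟨r n, this 0 n.zero_le⟩
  intro i hi
  induction hi using Nat.decreasingInduction with
  | self => exact ⟨1, one_mem _, by ext j; fin_cases j <;> simp [hend, one_apply]⟩
  | of_succ k hk ih =>
    obtain ⟨X, hX, hXr⟩ := ih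
    refine ⟨X * euclidStep (q k), mul_mem hX (Submonoid.subset_closure ⟨q k, rfl⟩), ?_⟩
    rw [mul_apply_eq_vecMul, ← smul_vecMul, ← hXr]
    ext j; fin_cases j <;> simp [euclidStep, vecMul, hrec k hk, mul_comm]

end

theorem stmt_5_general {R : Type*} [CommRing R] (x y : R)
    (h : WeakEuclid x y) : IsIdemProd !![x, y; 0, 0] := by
  obtain ⟨d, X, hX, hxy⟩ := h.exists_eq_smul_row_zero
  have hrow : !![x, y; 0, 0] = vecMulVec ![1, 0] ![x, y] := by
    ext i j; fin_cases i <;> fin_cases j <;> simp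
  rw [hrow, hxy]
  exact isIdemProd_vecMulVec_smul_row_zero d hX

theorem stmt_5 {R : Type*} [CommRing R] [IsDomain R] (x y : R)
    (h : WeakEuclid x y) : IsIdemProd !![x, y; 0, 0] :=
  stmt_5_general x y h
end

section
/- Over any integral domain R, if M is a singular 2×2 matrix whose first-row entries generate a principal ideal of R, then M is a column-row matrix, i.e., M = (x, y)^T (a, b) for some a, b, x, y in R. -/
/-!
Write the first row as `g • (u, v)`, where `g` generates the ideal it spans; Bézout for `g`
and cancellation of `g ≠ 0` make `u, v` coprime. Cancelling `g` in `det M = 0` shows that the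
second row `(c, d)` satisfies `u d = v c`, and coprimality then makes it a multiple of `(u, v)`.
-/

theorem IsCoprime.exists_eq_mul_of_mul_eq_mul {R : Type*} [CommRing R] {u v c d : R}
    (huv : IsCoprime u v) (h : u * d = v * c) : ∃ y, c = y * u ∧ d = y * v := by
  obtain ⟨s, t, hst⟩ := huv
  exact ⟨s * c + t * d, by linear_combination (-c) * hst - t * h,
    by linear_combination (-d) * hst + s * h⟩

theorem exists_isCoprime_of_span_pair_eq_span_singleton {R : Type*} [CommRing R] [IsDomain R]
    {p q g : R} (h : Ideal.span {p, q} = Ideal.span {g}) (hg : g ≠ 0) :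
    ∃ u v, p = g * u ∧ q = g * v ∧ IsCoprime u v := by
  have mem_span_g : ∀ r ∈ ({p, q} : Set R), ∃ w, r = g * w := fun r hr ↦ by
    obtain ⟨w, hw⟩ := Ideal.mem_span_singleton.mp (h ▸ Ideal.subset_span hr)
    exact ⟨w, hw⟩
  obtain ⟨u, hu⟩ := mem_span_g p (by simp)
  obtain ⟨v, hv⟩ := mem_span_g q (by simp)
  obtain ⟨s, t, hst⟩ := Ideal.mem_span_pair.mp (h ▸ Ideal.mem_span_singleton_self g)
  refine ⟨u, v, hu, hv, s, t, mul_left_cancel₀ hg ?_⟩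
  linear_combination hst - s * hu - t * hv

theorem stmt_11 {R : Type*} [CommRing R] [IsDomain R]
    (M : Matrix (Fin 2) (Fin 2) R) (hsing : M.det = 0)
    (hprinc : (Ideal.span {M 0 0, M 0 1}).IsPrincipal) :
    ∃ a b x y : R, M = !![x * a, x * b; y * a, y * b] := by
  obtain ⟨g, hg⟩ := hprinc
  rcases eq_or_ne g 0 with rfl | hg0
  · have first_row_zero := Ideal.span_eq_bot.mp (hg.trans (Ideal.span_singleton_eq_bot.mpr rfl))
    refine ⟨M 1 0, M 1 1, 0, 1, ?_⟩
    rw [Matrix.eta_fin_two M, first_row_zero (M 0 0) (by simp), first_row_zero (M 0 1) (by simp)]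
    simp
  obtain ⟨u, v, hu, hv, huv⟩ := exists_isCoprime_of_span_pair_eq_span_singleton hg hg0
  have second_row : u * M 1 1 = v * M 1 0 := mul_left_cancel₀ hg0 <| by
    rw [Matrix.det_fin_two] at hsing
    linear_combination hsing - M 1 1 * hu + M 1 0 * hv
  obtain ⟨y, hc, hd⟩ := huv.exists_eq_mul_of_mul_eq_mul second_row
  refine ⟨u, v, g, y, ?_⟩
  rw [Matrix.eta_fin_two M, hu, hv, hc, hd]
end

section
/- Let D be a real quadratic integer ring, p a prime integer that is irreducible but not prime in D, and z an element of D such that the ideal (p, z) of D is not principal and p divides the norm z·z̄ in Z. Then the singular matrix with rows (p, z) and (z̄, N(z)/p) is not a column-row matrix over D. -/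
-- Either `x` is a unit and `p ∣ a ∣ star z`, or `a` is a unit and `p ∣ x ∣ z`.
theorem Irreducible.dvd_of_columnRow {R : Type*} [CommMonoid R] [StarMul R]
    {p z x y a b : R} (hp : Irreducible p) (hp_star : star p = p)
    (hxa : p = x * a) (hxb : z = x * b) (hya : star z = y * a) : p ∣ z := by
  rcases hp.isUnit_or_isUnit hxa with hx | ha
  · have hpa : p ∣ a := (hx.dvd_mul_left).mp (hxa ▸ dvd_rfl)
    have hp_star_z : p ∣ star z := hya ▸ hpa.mul_left y
    simpa [hp_star] using map_dvd starMulAut hp_star_z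
  · have hpx : p ∣ x := (ha.dvd_mul_right).mp (hxa ▸ dvd_rfl)
    exact hxb ▸ hpx.mul_right b

theorem stmt_12_general (d : ℤ)
    (p : ℤ)
    (hirr : Irreducible (p : ℤ√d))
    (z : ℤ√d) (hprinc : ¬ (Ideal.span {(p : ℤ√d), z}).IsPrincipal) :
    ¬ ∃ a b x y : ℤ√d,
      !![(p : ℤ√d), z; star z, ((z.norm / p : ℤ) : ℤ√d)] =
        !![x * a, x * b; y * a, y * b] := by
  rintro ⟨a, b, x, y, h⟩
  have hxa : (p : ℤ√d) = x * a := by simpa using congrFun (congrFun h 0) 0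
  have hxb : z = x * b := by simpa using congrFun (congrFun h 0) 1
  have hya : star z = y * a := by simpa using congrFun (congrFun h 1) 0
  have hpz : (p : ℤ√d) ∣ z := hirr.dvd_of_columnRow (star_intCast p) hxa hxb hya
  exact hprinc ⟨⟨p, Ideal.span_pair_eq_span_left_iff_dvd.mpr hpz⟩⟩

theorem stmt_12 (d : ℤ) (hd : Squarefree d) (hd1 : 1 < d)
    (p : ℤ) (hp : Prime p)
    (hirr : Irreducible (p : ℤ√d)) (hnp : ¬ Prime (p : ℤ√d))
    (z : ℤ√d) (hprinc : ¬ (Ideal.span {(p : ℤ√d), z}).IsPrincipal)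
    (hdvd : p ∣ z.norm) :
    ¬ ∃ a b x y : ℤ√d,
      !![(p : ℤ√d), z; star z, ((z.norm / p : ℤ) : ℤ√d)] =
        !![x * a, x * b; y * a, y * b] :=
  stmt_12_general d p hirr z hprinc
end

section
/- Let R be an integral domain and x, y nonzero elements of R with a common factor z (x = z x', y = z y'). If the matrix with first row (x', y') and second row (0, 0) is a product of idempotent 2×2 matrices over R, then so is the matrix with first row (x, y) and second row (0, 0). -/
section IsIdemProd

variable {R : Type*} [CommRing R]

theorem IsIdemProd.mul {M N : Matrix (Fin 2) (Fin 2) R} (hM : IsIdemProd M)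
    (hN : IsIdemProd N) : IsIdemProd (M * N) := by
  obtain ⟨l, hl, rfl⟩ := hM
  obtain ⟨l', hl', rfl⟩ := hN
  refine ⟨l ++ l', fun T hT => ?_, (List.prod_append ..).symm⟩
  rcases List.mem_append.mp hT with hT | hT
  exacts [hl T hT, hl' T hT]

theorem isIdemProd_of_isIdempotentElem {E : Matrix (Fin 2) (Fin 2) R}
    (hE : IsIdempotentElem E) : IsIdemProd E :=
  ⟨[E], fun T hT => List.mem_singleton.mp hT ▸ hE, by simp⟩

theorem isIdemProd_topLeft (z : R) : IsIdemProd !![z, 0; 0, 0] := by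
  have hfactor : !![z, 0; 0, 0] = !![1, 1; 0, 0] * !![1, 0; z - 1, 0] := by
    simp
  rw [hfactor]
  refine (isIdemProd_of_isIdempotentElem ?_).mul (isIdemProd_of_isIdempotentElem ?_) <;>
    rw [IsIdempotentElem, Matrix.mul_fin_two] <;> simp

end IsIdemProd

theorem stmt_19_general {R : Type*} [CommRing R] (x y z x' y' : R)
    (hxz : x = z * x') (hyz : y = z * y')
    (h : IsIdemProd !![x', y'; 0, 0]) : IsIdemProd !![x, y; 0, 0] := by
  have hfactor : !![x, y; 0, 0] = !![z, 0; 0, 0] * !![x', y'; 0, 0] := by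
    simp [hxz, hyz]
  exact hfactor ▸ (isIdemProd_topLeft z).mul h

theorem stmt_19 {R : Type*} [CommRing R] [IsDomain R] (x y z x' y' : R)
    (hx : x ≠ 0) (hy : y ≠ 0) (hxz : x = z * x') (hyz : y = z * y')
    (h : IsIdemProd !![x', y'; 0, 0]) : IsIdemProd !![x, y; 0, 0] :=
  stmt_19_general x y z x' y' hxz hyz h
end
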